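/- For integers r ≥ s ≥ 3 with r ≤ ⌊(5s−1)/3⌋ − 1, the minimum n such that every 3-coloring Δ : [1,n] → {1,2,3} admits monochromatic subsets S₁, S₂ with |S₁| = s, |S₂| = r, max(S₁) < min(S₂), and diam(S₁) ≤ diam(S₂), equals 9s − 7. -/

import Mathlib

open Finset

/-- diameter of a finite set of naturals -/
def diam (S : Finset ℕ) : ℕ := (S.max.getD 0) - (S.min.getD 0)

/-- S is monochromatic under a coloring -/
def Mono {α : Type*} (f : ℕ → α) (S : Finset ℕ) : Prop := ∀ a ∈ S, ∀ b ∈ S, f a = f b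

/-- S is zero-sum mod m under an integer coloring -/
def ZeroSum (f : ℕ → ℤ) (m : ℕ) (S : Finset ℕ) : Prop := (m : ℤ) ∣ ∑ x ∈ S, f x

/-- every element of S colored ∞ (= none) -/
def InftyMono (f : ℕ → Option ℤ) (S : Finset ℕ) : Prop := ∀ x ∈ S, f x = none

/-- S consists of ℤ-colored elements and is zero-sum mod m -/
def ZeroSumOpt (f : ℕ → Option ℤ) (m : ℕ) (S : Finset ℕ) : Prop :=
  (∀ x ∈ S, (f x).isSome) ∧ (m : ℤ) ∣ ∑ x ∈ S, (f x).getD 0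

/-!
Upper bound: if a 3-colouring of `[1, 9s-7]` had no such pair, then any monochromatic `X < Y`
with `|X| ≥ s`, `|Y| ≥ r` would satisfy `diam Y < diam X`. Some colour has `s` points in
`[1, 3s-2]`, a set of diameter at most `3s-3`, so every colour class `C` of the `6s-5` points of
`[3s-1, 9s-7]` with `|C| ≥ r` has diameter at most `3s-4`. Splitting `C` into its `s` smallest
points and the rest gives `2|C| ≤ diam C + 2s`, and two such classes satisfy
`|C| + |C'| ≤ max (diam C) (diam C') + s`; with `3r + 4 ≤ 5s` these bounds cannot add up to `6s-5`.

Lower bound: in the colouring `extremalColoring s` of `[1, 9s-8]` every monochromatic `s`-set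
has to jump over a gap between blocks of its colour, which makes it wider than every
monochromatic `r`-set lying to its right.
-/

theorem diam_eq_max'_sub_min' {S : Finset ℕ} (hS : S.Nonempty) :
    diam S = S.max' hS - S.min' hS := by
  rw [diam, ← coe_max' hS, ← coe_min' hS]
  rfl

theorem sub_le_diam {S : Finset ℕ} {a b : ℕ} (ha : a ∈ S) (hb : b ∈ S) : b - a ≤ diam S := by
  rw [diam_eq_max'_sub_min' ⟨a, ha⟩]
  have := min'_le S a ha
  have := le_max' S b hb
  omega

theorem diam_le_of_subset_Icc {S : Finset ℕ} {a b : ℕ} (h : S ⊆ Icc a b) : diam S ≤ b - a := by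
  rcases S.eq_empty_or_nonempty with rfl | hS
  · exact Nat.zero_le _
  rw [diam_eq_max'_sub_min' hS]
  have := (mem_Icc.1 (h (min'_mem S hS))).1
  have := (mem_Icc.1 (h (max'_mem S hS))).2
  omega

theorem diam_mono {S T : Finset ℕ} (h : S ⊆ T) : diam S ≤ diam T := by
  rcases T.eq_empty_or_nonempty with rfl | hT
  · rw [subset_empty.1 h]
  rw [diam_eq_max'_sub_min' hT]
  exact diam_le_of_subset_Icc fun x hx => mem_Icc.2 ⟨min'_le T x (h hx), le_max' T x (h hx)⟩

theorem card_le_of_subset_Icc {S : Finset ℕ} {a b : ℕ} (h : S ⊆ Icc a b) : #S ≤ b + 1 - a :=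
  (card_le_card h).trans_eq (Nat.card_Icc a b)

theorem card_le_diam_add_one (S : Finset ℕ) : #S ≤ diam S + 1 := by
  rcases S.eq_empty_or_nonempty with rfl | hS
  · simp
  have := card_le_of_subset_Icc (a := S.min' hS) (b := S.max' hS) fun x hx =>
    mem_Icc.2 ⟨min'_le S x hx, le_max' S x hx⟩
  rw [diam_eq_max'_sub_min' hS]
  omega

theorem diam_add_diam_lt_diam_union {X Z : Finset ℕ} (hX : X.Nonempty) (hZ : Z.Nonempty)
    (h : ∀ x ∈ X, ∀ z ∈ Z, x < z) : diam X + diam Z < diam (X ∪ Z) := by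
  have hgap := h _ (max'_mem X hX) _ (min'_mem Z hZ)
  have hspan := sub_le_diam (mem_union_left Z (min'_mem X hX)) (mem_union_right X (max'_mem Z hZ))
  have := min'_le X _ (max'_mem X hX)
  have := min'_le Z _ (max'_mem Z hZ)
  rw [diam_eq_max'_sub_min' hX, diam_eq_max'_sub_min' hZ]
  omega

theorem exists_subset_card_eq_forall_lt {T : Finset ℕ} {j : ℕ} (hj : j ≤ #T) :
    ∃ X ⊆ T, #X = j ∧ ∀ x ∈ X, ∀ y ∈ T \ X, x < y := by
  induction T using Finset.induction_on_max generalizing j with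
  | empty => exact ⟨∅, subset_refl _, by rw [card_empty] at hj ⊢; omega, by simp⟩
  | insert a T ha ih =>
    have haT : a ∉ T := fun h => lt_irrefl a (ha a h)
    rw [card_insert_of_notMem haT] at hj
    rcases Nat.lt_or_ge j (#T + 1) with hj' | hj'
    · obtain ⟨X, hXT, hXj, hXlt⟩ := ih (Nat.lt_succ_iff.1 hj')
      refine ⟨X, hXT.trans (subset_insert a T), hXj, fun x hx y hy => ?_⟩
      rcases mem_insert.1 (mem_sdiff.1 hy).1 with rfl | hyT
      · exact ha x (hXT hx)
      · exact hXlt x hx y (mem_sdiff.2 ⟨hyT, (mem_sdiff.1 hy).2⟩)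
    · refine ⟨insert a T, subset_refl _, by rw [card_insert_of_notMem haT]; omega, by simp⟩

theorem exists_subset_card_eq_diam_add_card_le {T : Finset ℕ} {s : ℕ} (hs : 1 ≤ s)
    (hsT : s ≤ #T) : ∃ X ⊆ T, #X = s ∧ diam X + #T ≤ diam T + s := by
  obtain ⟨L, hLT, hLcard, hLlt⟩ := exists_subset_card_eq_forall_lt (Nat.sub_le #T s)
  refine ⟨T \ L, sdiff_subset, by rw [card_sdiff_of_subset hLT]; omega, ?_⟩
  have hX : (T \ L).Nonempty := card_pos.1 (by rw [card_sdiff_of_subset hLT]; omega)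
  rcases L.eq_empty_or_nonempty with rfl | hL
  · rw [card_empty] at hLcard
    rw [sdiff_empty]
    omega
  have hsplit := diam_add_diam_lt_diam_union hL hX hLlt
  rw [union_sdiff_of_subset hLT] at hsplit
  have := card_le_diam_add_one L
  omega

theorem exists_subset_card_eq_diam_eq {Y : Finset ℕ} {k : ℕ} (hk : 2 ≤ k) (hkY : k ≤ #Y) :
    ∃ Y' ⊆ Y, #Y' = k ∧ diam Y' = diam Y := by
  have hY : Y.Nonempty := card_pos.1 (by omega)
  have hends : {Y.min' hY, Y.max' hY} ⊆ Y := by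
    simp [insert_subset_iff, min'_mem, max'_mem]
  obtain ⟨Y', hendsY', hY'Y, hY'k⟩ :=
    exists_subsuperset_card_eq hends ((card_le_two).trans hk) hkY
  refine ⟨Y', hY'Y, hY'k, le_antisymm (diam_mono hY'Y) ?_⟩
  rw [diam_eq_max'_sub_min' hY]
  exact sub_le_diam (hendsY' (by simp)) (hendsY' (by simp))

theorem card_add_le_diam_add_one_of_gap {X : Finset ℕ} {b c : ℕ}
    (hgap : ∀ x ∈ X, x ≤ b ∨ c ≤ x) (hlo : ∃ x ∈ X, x ≤ b) (hhi : ∃ x ∈ X, c ≤ x) :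
    #X + (c - b - 1) ≤ diam X + 1 := by
  obtain ⟨u, hu, hub⟩ := hlo
  obtain ⟨v, hv, hcv⟩ := hhi
  have hX : X.Nonempty := ⟨u, hu⟩
  have hlow : #{x ∈ X | x ≤ b} ≤ b + 1 - X.min' hX :=
    card_le_of_subset_Icc fun x hx => by
      rw [mem_filter] at hx
      exact mem_Icc.2 ⟨min'_le X x hx.1, hx.2⟩
  have hhigh : #{x ∈ X | ¬ x ≤ b} ≤ X.max' hX + 1 - c :=
    card_le_of_subset_Icc fun x hx => by
      rw [mem_filter] at hx
      exact mem_Icc.2 ⟨(hgap x hx.1).resolve_left hx.2, le_max' X x hx.1⟩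
  have hsplit := card_filter_add_card_filter_not (s := X) (fun x => x ≤ b)
  have := min'_le X u hu
  have := le_max' X v hv
  have := card_le_diam_add_one X
  rw [diam_eq_max'_sub_min' hX] at this ⊢
  omega

theorem card_add_le_diam_add_one_of_two_blocks {X : Finset ℕ} {a b c d : ℕ}
    (hX : ∀ x ∈ X, (a ≤ x ∧ x ≤ b) ∨ (c ≤ x ∧ x ≤ d)) (hab : b + 1 - a < #X)
    (hcd : d + 1 - c < #X) : #X + (c - b - 1) ≤ diam X + 1 := by
  refine card_add_le_diam_add_one_of_gap (fun x hx => by have := hX x hx; omega) ?_ ?_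
  · by_contra! h
    have := card_le_of_subset_Icc (a := c) (b := d) fun x hx =>
      mem_Icc.2 (by have := hX x hx; have := h x hx; omega)
    omega
  · by_contra! h
    have := card_le_of_subset_Icc (a := a) (b := b) fun x hx =>
      mem_Icc.2 (by have := hX x hx; have := h x hx; omega)
    omega

theorem Mono.subset {α : Type*} {Δ : ℕ → α} {S T : Finset ℕ} (hT : Mono Δ T) (hST : S ⊆ T) :
    Mono Δ S :=
  fun a ha b hb => hT a (hST ha) b (hST hb)

def HasPair {α : Type*} (Δ : ℕ → α) (s r n : ℕ) : Prop :=
  ∃ S₁ S₂ : Finset ℕ,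
    S₁ ⊆ Finset.Icc 1 n ∧ S₂ ⊆ Finset.Icc 1 n ∧
    Mono Δ S₁ ∧ Mono Δ S₂ ∧ S₁.card = s ∧ S₂.card = r ∧
    (∀ a ∈ S₁, ∀ b ∈ S₂, a < b) ∧ diam S₁ ≤ diam S₂

section NoPair

variable {α : Type*} {Δ : ℕ → α} {s r n : ℕ}

theorem HasPair.mono {m : ℕ} (h : HasPair Δ s r n) (hnm : n ≤ m) : HasPair Δ s r m := by
  obtain ⟨S₁, S₂, h₁, h₂, hrest⟩ := h
  have hIcc : Icc 1 n ⊆ Icc 1 m := Icc_subset_Icc_right hnm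
  exact ⟨S₁, S₂, h₁.trans hIcc, h₂.trans hIcc, hrest⟩

theorem diam_lt_diam_of_not_hasPair (h : ¬ HasPair Δ s r n) (hr : 2 ≤ r) {X Y : Finset ℕ}
    (hX : X ⊆ Icc 1 n) (hY : Y ⊆ Icc 1 n) (hmX : Mono Δ X) (hmY : Mono Δ Y)
    (hsX : s ≤ #X) (hrY : r ≤ #Y) (hXY : ∀ x ∈ X, ∀ y ∈ Y, x < y) : diam Y < diam X := by
  obtain ⟨X', hX'X, hX's⟩ := exists_subset_card_eq hsX
  obtain ⟨Y', hY'Y, hY'r, hdY'⟩ := exists_subset_card_eq_diam_eq hr hrY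
  by_contra! hle
  refine h ⟨X', Y', hX'X.trans hX, hY'Y.trans hY, hmX.subset hX'X, hmY.subset hY'Y, hX's, hY'r,
    fun a ha b hb => hXY a (hX'X ha) b (hY'Y hb), ?_⟩
  rw [hdY']
  exact (diam_mono hX'X).trans hle

theorem two_mul_card_le_diam_add_of_not_hasPair (h : ¬ HasPair Δ s r n) (hr : 2 ≤ r)
    (hs : 1 ≤ s) {C : Finset ℕ} (hC : C ⊆ Icc 1 n) (hmC : Mono Δ C) (hcard : s + r ≤ #C) :
    2 * #C ≤ diam C + 2 * s := by
  obtain ⟨X, hXC, hXs, hXlt⟩ := exists_subset_card_eq_forall_lt (T := C) (j := s) (by omega)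
  have hZ : #(C \ X) = #C - s := by rw [card_sdiff_of_subset hXC, hXs]
  have hdiam := diam_lt_diam_of_not_hasPair h hr (hXC.trans hC) (sdiff_subset.trans hC)
    (hmC.subset hXC) (hmC.subset sdiff_subset) hXs.ge (by omega) hXlt
  have hsplit := diam_add_diam_lt_diam_union (card_pos.1 (by omega)) (card_pos.1 (by omega)) hXlt
  rw [union_sdiff_of_subset hXC] at hsplit
  have := card_le_diam_add_one (C \ X)
  omega

theorem card_add_card_le_of_not_hasPair_of_min'_lt (h : ¬ HasPair Δ s r n) (hr : 2 ≤ r)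
    (hs : 1 ≤ s) {Y Z : Finset ℕ} (hY : Y ⊆ Icc 1 n) (hZ : Z ⊆ Icc 1 n) (hmY : Mono Δ Y)
    (hmZ : Mono Δ Z) (hYZ : Disjoint Y Z) (hrZ : r ≤ #Z) (hYne : Y.Nonempty)
    (hZne : Z.Nonempty) (hmin : Y.min' hYne < Z.min' hZne) :
    #Y + #Z ≤ max (diam Y) (diam Z) + s := by
  -- Either `Y ∪ Z` fits in `[min Y, max Y]`, or the points of `Y` from `min Z` on fit with `Z` in
  -- `[min Z, max Z]`, while the part of `Y` below `Z` is short or contains a narrow `s`-set.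
  set z := Z.min' hZne
  by_cases hmax : Z.max' hZne ≤ Y.max' hYne
  · have hYZ_Icc := card_le_of_subset_Icc (a := Y.min' hYne) (b := Y.max' hYne)
      fun x hx => by
        rcases mem_union.1 hx with hx | hx
        · exact mem_Icc.2 ⟨min'_le Y x hx, le_max' Y x hx⟩
        · exact mem_Icc.2 ⟨hmin.le.trans (min'_le Z x hx), (le_max' Z x hx).trans hmax⟩
    rw [card_union_of_disjoint hYZ] at hYZ_Icc
    rw [diam_eq_max'_sub_min' hYne]
    omega
  · have hUZ := card_le_of_subset_Icc (a := z) (b := Z.max' hZne)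
      (S := {y ∈ Y | ¬ y < z} ∪ Z) fun x hx => by
        rcases mem_union.1 hx with hx | hx
        · rw [mem_filter] at hx
          exact mem_Icc.2 ⟨not_lt.1 hx.2, (le_max' Y x hx.1).trans (not_le.1 hmax).le⟩
        · exact mem_Icc.2 ⟨min'_le Z x hx, le_max' Z x hx⟩
    rw [card_union_of_disjoint (hYZ.mono_left (filter_subset _ _))] at hUZ
    have hsplit := card_filter_add_card_filter_not (s := Y) (· < z)
    rw [diam_eq_max'_sub_min' hZne]
    by_cases hT : #{y ∈ Y | y < z} < s
    · omega
    obtain ⟨X, hXT, hXs, hdX⟩ := exists_subset_card_eq_diam_add_card_le hs (not_lt.1 hT)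
    have hXY : X ⊆ Y := hXT.trans (filter_subset _ _)
    have hdZ := diam_lt_diam_of_not_hasPair h hr (hXY.trans hY) hZ (hmY.subset hXY) hmZ hXs.ge hrZ
      fun x hx y hy => lt_of_lt_of_le (mem_filter.1 (hXT hx)).2 (min'_le Z y hy)
    have := diam_mono (filter_subset (· < z) Y)
    rw [diam_eq_max'_sub_min' hZne] at hdZ
    omega

theorem card_add_card_le_of_not_hasPair (h : ¬ HasPair Δ s r n) (hr : 2 ≤ r) (hs : 1 ≤ s)
    {Y Z : Finset ℕ} (hY : Y ⊆ Icc 1 n) (hZ : Z ⊆ Icc 1 n) (hmY : Mono Δ Y) (hmZ : Mono Δ Z)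
    (hYZ : Disjoint Y Z) (hrY : r ≤ #Y) (hrZ : r ≤ #Z) :
    #Y + #Z ≤ max (diam Y) (diam Z) + s := by
  have hYne : Y.Nonempty := card_pos.1 (by omega)
  have hZne : Z.Nonempty := card_pos.1 (by omega)
  rcases lt_trichotomy (Y.min' hYne) (Z.min' hZne) with hlt | heq | hgt
  · exact card_add_card_le_of_not_hasPair_of_min'_lt h hr hs hY hZ hmY hmZ hYZ hrZ hYne hZne hlt
  · exact absurd (heq ▸ min'_mem Z hZne) (disjoint_left.1 hYZ (min'_mem Y hYne))
  · rw [add_comm, max_comm]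
    exact card_add_card_le_of_not_hasPair_of_min'_lt h hr hs hZ hY hmZ hmY hYZ.symm hrY hZne hYne
      hgt

end NoPair

theorem hasPair_nine_mul_sub_seven {s r : ℕ} (hr : 2 ≤ r) (hrs : 3 * r + 4 ≤ 5 * s)
    (Δ : ℕ → Fin 3) : HasPair Δ s r (9 * s - 7) := by
  by_contra h
  obtain ⟨c₀, -, hc₀⟩ := exists_lt_card_fiber_of_mul_lt_card_of_maps_to (s := Icc 1 (3 * s - 2))
    (t := univ) (f := Δ) (n := s - 1) (fun _ _ => mem_univ _)
    (by rw [card_univ, Fintype.card_fin, Nat.card_Icc]; omega)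
  set W := {x ∈ Icc 1 (3 * s - 2) | Δ x = c₀}
  have hW : W ⊆ Icc 1 (9 * s - 7) := (filter_subset _ _).trans (Icc_subset_Icc_right (by omega))
  have hmW : Mono Δ W := fun a ha b hb => (mem_filter.1 ha).2.trans (mem_filter.1 hb).2.symm
  have hdW : diam W ≤ 3 * s - 3 := (diam_le_of_subset_Icc (filter_subset _ _)).trans (by omega)
  set C : Fin 3 → Finset ℕ := fun c => {x ∈ Icc (3 * s - 1) (9 * s - 7) | Δ x = c}
  have hC c : C c ⊆ Icc 1 (9 * s - 7) := (filter_subset _ _).trans (Icc_subset_Icc_left (by omega))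
  have hmC c : Mono Δ (C c) := fun a ha b hb => (mem_filter.1 ha).2.trans (mem_filter.1 hb).2.symm
  have hsum : #(C 0) + #(C 1) + #(C 2) = 6 * s - 5 := by
    have := card_eq_sum_card_fiberwise (f := Δ) (s := Icc (3 * s - 1) (9 * s - 7)) (t := univ)
      fun _ _ => mem_univ _
    rw [Fin.sum_univ_three, Nat.card_Icc] at this
    simp only [C]
    omega
  have hdC c (hc : r ≤ #(C c)) : diam (C c) ≤ 3 * s - 4 := by
    have := diam_lt_diam_of_not_hasPair h hr hW (hC c) hmW (hmC c) (by omega) hc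
      fun x hx y hy => by
        have := (mem_Icc.1 (mem_filter.1 hx).1).2
        have := (mem_Icc.1 (mem_filter.1 hy).1).1
        omega
    omega
  have hsingle c (hc : s + r ≤ #(C c)) : 2 * #(C c) ≤ 5 * s - 4 := by
    have := two_mul_card_le_diam_add_of_not_hasPair h hr (by omega) (hC c) (hmC c) hc
    have := hdC c (by omega)
    omega
  have hpair a b (hab : a ≠ b) (ha : r ≤ #(C a)) (hb : r ≤ #(C b)) :
      #(C a) + #(C b) ≤ 4 * s - 4 := by
    have hdisj : Disjoint (C a) (C b) :=
      disjoint_filter.2 fun _ _ hxa hxb => hab (hxa.symm.trans hxb)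
    have := card_add_card_le_of_not_hasPair h hr (by omega) (hC a) (hC b) (hmC a) (hmC b) hdisj
      ha hb
    have := hdC a ha
    have := hdC b hb
    omega
  have := hsingle 0
  have := hsingle 1
  have := hsingle 2
  have := hpair 0 1 (by decide)
  have := hpair 0 2 (by decide)
  have := hpair 1 2 (by decide)
  omega

abbrev InBlocks (s p x : ℕ) : Prop :=
  (p ≤ x ∧ x ≤ p + s - 2) ∨ (p + 3 * s - 3 ≤ x ∧ x ≤ p + 4 * s - 5) ∨
    (p + 5 * s - 5 ≤ x ∧ x ≤ p + 6 * s - 7)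

/-- On `[1, 9s-8]`, colour 0 is `{1} ∪ [2s, 3s-2] ∪ [7s-5, 9s-8]`, and colours 1 and 2 are
`InBlocks s 2` and `InBlocks s (s+1)`: three blocks of length `s-1` separated by gaps of
lengths `2s-2` and `s-1`. -/
def extremalColoring (s x : ℕ) : Fin 3 :=
  if x ≤ 1 ∨ (2 * s ≤ x ∧ x ≤ 3 * s - 2) ∨ 7 * s - 5 ≤ x then 0
  else if InBlocks s 2 x then 1
  else 2

theorem extremalColoring_eq_zero {s x : ℕ} (h : extremalColoring s x = 0) :
    x ≤ 1 ∨ (2 * s ≤ x ∧ x ≤ 3 * s - 2) ∨ 7 * s - 5 ≤ x := by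
  unfold extremalColoring at h
  split_ifs at h with h₀ <;> first | exact h₀ | exact absurd h (by decide)

theorem exists_inBlocks_of_extremalColoring_ne_zero {s : ℕ} (hs : 3 ≤ s) {c : Fin 3}
    (hc : c ≠ 0) : ∃ p, 2 ≤ p ∧ p ≤ s + 1 ∧ ∀ x, extremalColoring s x = c → InBlocks s p x := by
  fin_cases c
  · exact absurd rfl hc
  · refine ⟨2, le_rfl, by omega, fun x h => ?_⟩
    unfold extremalColoring at h
    split_ifs at h with h₀ h₁ <;> first | exact h₁ | exact absurd h (by decide)
  · refine ⟨s + 1, by omega, le_rfl, fun x h => ?_⟩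
    unfold extremalColoring at h
    split_ifs at h <;> first | exact absurd h (by decide) | omega

section Blocks

variable {s p : ℕ}

theorem le_diam_of_forall_inBlocks (hs : 3 ≤ s) {X : Finset ℕ} (hX : ∀ x ∈ X, InBlocks s p x)
    (hcard : #X = s) :
    3 * s - 3 ≤ diam X ∨ (2 * s - 2 ≤ diam X ∧ ∃ x ∈ X, p + 5 * s - 5 ≤ x) := by
  by_cases hhi : ∃ x ∈ X, p + 5 * s - 5 ≤ x
  · by_cases hmid : ∃ x ∈ X, x ≤ p + 4 * s - 5
    · have := card_add_le_diam_add_one_of_gap (fun x hx => by have := hX x hx; omega) hmid hhi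
      exact Or.inr ⟨by omega, hhi⟩
    · push Not at hmid
      have := card_le_of_subset_Icc (a := p + 5 * s - 5) (b := p + 6 * s - 7) fun x hx =>
        mem_Icc.2 (by have := hX x hx; have := hmid x hx; omega)
      omega
  · push Not at hhi
    have := card_add_le_diam_add_one_of_two_blocks (a := p) (b := p + s - 2)
      (c := p + 3 * s - 3) (d := p + 4 * s - 5)
      (fun x hx => by have := hX x hx; have := hhi x hx; omega) (by omega) (by omega)
    omega

theorem diam_le_of_forall_inBlocks (hs : 3 ≤ s) {Y : Finset ℕ} (hY : ∀ y ∈ Y, InBlocks s p y)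
    (hcard : s ≤ #Y) :
    (∃ y ∈ Y, y ≤ p + s - 2) ∨ ((∃ y ∈ Y, y ≤ p + 4 * s - 5) ∧ diam Y ≤ 3 * s - 4) := by
  by_cases hlo : ∃ y ∈ Y, y ≤ p + s - 2
  · exact Or.inl hlo
  push Not at hlo
  by_cases hmid : ∃ y ∈ Y, y ≤ p + 4 * s - 5
  · refine Or.inr ⟨hmid, ?_⟩
    have := diam_le_of_subset_Icc (a := p + 3 * s - 3) (b := p + 6 * s - 7) fun y hy =>
      mem_Icc.2 (by have := hY y hy; have := hlo y hy; omega)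
    omega
  · push Not at hmid
    have := card_le_of_subset_Icc (a := p + 5 * s - 5) (b := p + 6 * s - 7) fun y hy =>
      mem_Icc.2 (by have := hY y hy; have := hmid y hy; omega)
    omega

end Blocks

theorem le_diam_of_mono_extremalColoring {s : ℕ} (hs : 3 ≤ s) {X : Finset ℕ}
    (hX : Mono (extremalColoring s) X) (hcard : #X = s) :
    3 * s - 3 ≤ diam X ∨ (2 * s - 2 ≤ diam X ∧ ∃ x ∈ X, 5 * s - 3 ≤ x) ∨
      ∀ x ∈ X, 7 * s - 5 ≤ x := by
  obtain ⟨x₀, hx₀⟩ : X.Nonempty := card_pos.1 (by omega)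
  by_cases hc : extremalColoring s x₀ = 0
  · have h0 x (hx : x ∈ X) := extremalColoring_eq_zero ((hX x hx x₀ hx₀).trans hc)
    by_cases htail : ∀ x ∈ X, 7 * s - 5 ≤ x
    · exact Or.inr (Or.inr htail)
    push Not at htail
    obtain ⟨x, hx, hx7⟩ := htail
    refine Or.inl ?_
    by_cases hhi : ∃ x ∈ X, 7 * s - 5 ≤ x
    · have := card_add_le_diam_add_one_of_gap (b := 3 * s - 2)
        (fun x hx => by have := h0 x hx; omega) ⟨x, hx, by have := h0 x hx; omega⟩ hhi
      omega
    · push Not at hhi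
      have := card_add_le_diam_add_one_of_two_blocks (a := 0) (b := 1) (c := 2 * s)
        (d := 3 * s - 2) (fun x hx => by have := h0 x hx; have := hhi x hx; omega)
        (by omega) (by omega)
      omega
  · obtain ⟨p, hp, -, hpX⟩ := exists_inBlocks_of_extremalColoring_ne_zero hs hc
    rcases le_diam_of_forall_inBlocks hs (fun x hx => hpX x (hX x hx x₀ hx₀)) hcard with
      h | ⟨h, x, hx, hx5⟩
    · exact Or.inl h
    · exact Or.inr (Or.inl ⟨h, x, hx, by omega⟩)

theorem diam_le_of_mono_extremalColoring {s : ℕ} (hs : 3 ≤ s) {Y : Finset ℕ}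
    (hY : Mono (extremalColoring s) Y) (hcard : s ≤ #Y) :
    (∃ y ∈ Y, y ≤ 3 * s - 2) ∨ ((∃ y ∈ Y, y ≤ 5 * s - 4) ∧ diam Y ≤ 3 * s - 4) ∨
      ∀ y ∈ Y, 7 * s - 5 ≤ y := by
  obtain ⟨y₀, hy₀⟩ : Y.Nonempty := card_pos.1 (by omega)
  by_cases hc : extremalColoring s y₀ = 0
  · by_cases hlo : ∃ y ∈ Y, y ≤ 3 * s - 2
    · exact Or.inl hlo
    push Not at hlo
    refine Or.inr (Or.inr fun y hy => ?_)
    have := extremalColoring_eq_zero ((hY y hy y₀ hy₀).trans hc)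
    have := hlo y hy
    omega
  · obtain ⟨p, -, hp, hpY⟩ := exists_inBlocks_of_extremalColoring_ne_zero hs hc
    rcases diam_le_of_forall_inBlocks hs (fun y hy => hpY y (hY y hy y₀ hy₀)) hcard with
      ⟨y, hy, hy'⟩ | ⟨⟨y, hy, hy'⟩, hd⟩
    · exact Or.inl ⟨y, hy, by omega⟩
    · exact Or.inr (Or.inl ⟨⟨y, hy, by omega⟩, hd⟩)

theorem not_hasPair_extremalColoring {s r : ℕ} (hs : 3 ≤ s) (hsr : s ≤ r) :
    ¬ HasPair (extremalColoring s) s r (9 * s - 8) := by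
  rintro ⟨X, Y, hX, hY, hmX, hmY, hXs, hYr, hXY, hd⟩
  obtain ⟨x₀, hx₀⟩ : X.Nonempty := card_pos.1 (by omega)
  have hYcases : (∃ y ∈ Y, y ≤ 5 * s - 4 ∧ diam X ≤ 3 * s - 4) ∨ ∀ y ∈ Y, 7 * s - 5 ≤ y := by
    rcases diam_le_of_mono_extremalColoring hs hmY (hYr ▸ hsr) with
      ⟨y, hy, hy3⟩ | ⟨⟨y, hy, hy5⟩, hdY⟩ | hY7
    · refine Or.inl ⟨y, hy, by omega, (diam_le_of_subset_Icc (a := 1) (b := 3 * s - 3)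
        fun x hx => mem_Icc.2 ⟨(mem_Icc.1 (hX hx)).1, ?_⟩).trans (by omega)⟩
      have := hXY x hx y hy
      omega
    · exact Or.inl ⟨y, hy, hy5, hd.trans hdY⟩
    · exact Or.inr hY7
  rcases hYcases with ⟨y, hy, hy5, hdX⟩ | hY7
  · have := hXY x₀ hx₀ y hy
    rcases le_diam_of_mono_extremalColoring hs hmX hXs with h | ⟨-, x, hx, hx5⟩ | h
    · omega
    · have := hXY x hx y hy
      omega
    · have := h x₀ hx₀
      omega
  · have hYIcc : Y ⊆ Icc (7 * s - 5) (9 * s - 8) :=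
      fun y hy => mem_Icc.2 ⟨hY7 y hy, (mem_Icc.1 (hY hy)).2⟩
    have := diam_le_of_subset_Icc hYIcc
    rcases le_diam_of_mono_extremalColoring hs hmX hXs with h | ⟨h, -⟩ | h
    · omega
    · omega
    · have hXIcc : X ⊆ Icc (7 * s - 5) (9 * s - 8) :=
        fun x hx => mem_Icc.2 ⟨h x hx, (mem_Icc.1 (hX hx)).2⟩
      have hdisj : Disjoint X Y := disjoint_left.2 fun a ha haY => lt_irrefl a (hXY a ha a haY)
      have := card_le_of_subset_Icc (union_subset hXIcc hYIcc)
      rw [card_union_of_disjoint hdisj] at this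
      omega

theorem stmt7 (s r : ℕ) (hs : 3 ≤ s) (hsr : s ≤ r) (hr : r ≤ (5 * s - 1) / 3 - 1) :
    IsLeast {n : ℕ | ∀ Δ : ℕ → Fin 3, ∃ S₁ S₂ : Finset ℕ,
    S₁ ⊆ Finset.Icc 1 n ∧ S₂ ⊆ Finset.Icc 1 n ∧
    Mono Δ S₁ ∧ Mono Δ S₂ ∧ S₁.card = s ∧ S₂.card = r ∧
    (∀ a ∈ S₁, ∀ b ∈ S₂, a < b) ∧ diam S₁ ≤ diam S₂} (9 * s - 7) := by
  refine ⟨hasPair_nine_mul_sub_seven (by omega) (by omega), fun n hn => ?_⟩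
  by_contra! hlt
  exact not_hasPair_extremalColoring hs hsr (HasPair.mono (hn (extremalColoring s)) (by omega))
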